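/- Let K be a convex subset of the Euclidean plane, let c ∈ K be a point maximizing f(x) = dist(x, Kᶜ) over K, and let y ∈ K. Then the function t ↦ f(c + t•(y - c)) is monotone nonincreasing on [0,1]. -/

import Mathlib

/-!
On a convex set `K` the inradius `x ↦ infDist x Kᶜ` is concave: the ball of radius
`a r₁ + b r₂` about `a • x + b • z` is the Minkowski combination `a • B(x, r₁) + b • B(z, r₂)`,
which lies in `K` by convexity. A concave function restricted to a segment issuing from one of
its maximisers is nonincreasing.
-/

open Metric Set Pointwise

section

variable {𝕜 β : Type*} [Field 𝕜] [LinearOrder 𝕜] [IsStrictOrderedRing 𝕜]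
  [AddCommMonoid β] [LinearOrder β] [IsOrderedCancelAddMonoid β] [Module 𝕜 β]
  [PosSMulStrictMono 𝕜 β]

theorem ConcaveOn.antitoneOn_of_isMaxOn {s : Set 𝕜} {f : 𝕜 → β} {a : 𝕜}
    (hf : ConcaveOn 𝕜 s f) (hmax : IsMaxOn f s a) (ha : a ∈ s) : AntitoneOn f (s ∩ Ici a) := by
  rintro x ⟨hx, hax⟩ y ⟨hy, -⟩ hxy
  rcases hax.eq_or_lt with rfl | hax
  · exact hmax hy
  · exact hf.right_le_of_le_left'' ha hy hax hxy (hmax hx)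

variable {E : Type*} [AddCommGroup E] [Module 𝕜 E]

theorem ConcaveOn.antitoneOn_add_smul_sub_of_isMaxOn {s : Set E} {f : E → β} {c y : E}
    (hf : ConcaveOn 𝕜 s f) (hmax : IsMaxOn f s c) (hc : c ∈ s) (hy : y ∈ s) :
    AntitoneOn (fun t : 𝕜 => f (c + t • (y - c))) (Icc 0 1) := by
  have hline : ConcaveOn 𝕜 (Icc 0 1) fun t : 𝕜 => f (c + t • (y - c)) := by
    have := (hf.comp_affineMap (AffineMap.lineMap c y)).subset
      (fun t ht => hf.1.lineMap_mem hc hy ht) (convex_Icc 0 1)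
    simpa only [Function.comp_def, AffineMap.lineMap_apply_module', add_comm] using this
  have hmax' : IsMaxOn (fun t : 𝕜 => f (c + t • (y - c))) (Icc 0 1) 0 := fun t ht => by
    simpa using hmax (hf.1.add_smul_sub_mem hc hy ht)
  exact (hline.antitoneOn_of_isMaxOn hmax' (left_mem_Icc.2 zero_le_one)).mono
    fun _ ht => ⟨ht, ht.1⟩

end

lemma Metric.le_infDist_compl_of_ball_subset {α : Type*} [PseudoMetricSpace α] {K : Set α}
    {x : α} {r : ℝ} (hK : Kᶜ.Nonempty) (h : ball x r ⊆ K) : r ≤ infDist x Kᶜ :=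
  (le_infDist hK).2 fun _ hy => not_lt.1 fun hlt => hy (h (mem_ball'.2 hlt))

section

variable {E : Type*} [NormedAddCommGroup E] [NormedSpace ℝ E] {K : Set E}

lemma singleton_add_infDist_compl_smul_unitBall_subset {x : E} (hx : x ∈ K) :
    {x} + infDist x Kᶜ • ball (0 : E) 1 ⊆ K := by
  rcases (infDist_nonneg (x := x) (s := Kᶜ)).eq_or_lt with h | h
  · rw [← h, zero_smul_set (nonempty_ball.2 one_pos), add_zero, singleton_subset_iff]
    exact hx
  · rw [smul_unitBall_of_pos h, singleton_add_ball, add_zero]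
    exact ball_infDist_compl_subset

theorem Convex.concaveOn_infDist_compl (hK : Convex ℝ K) :
    ConcaveOn ℝ K fun x => infDist x Kᶜ := by
  rcases Kᶜ.eq_empty_or_nonempty with hKc | hKc
  · simpa only [hKc, infDist_empty] using concaveOn_const 0 hK
  refine ⟨hK, fun x hx z hz a b ha hb hab => ?_⟩
  set B := ball (0 : E) 1
  set R := a • infDist x Kᶜ + b • infDist z Kᶜ
  have hxR : 0 ≤ a • infDist x Kᶜ := smul_nonneg ha infDist_nonneg
  have hzR : 0 ≤ b • infDist z Kᶜ := smul_nonneg hb infDist_nonneg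
  rcases (add_nonneg hxR hzR).eq_or_lt with hR | hR
  · exact hR.symm.le.trans infDist_nonneg
  refine le_infDist_compl_of_ball_subset hKc ?_
  calc ball (a • x + b • z) R = {a • x + b • z} + R • B := by
        rw [smul_unitBall_of_pos hR, singleton_add_ball, add_zero]
    _ = a • ({x} + infDist x Kᶜ • B) + b • ({z} + infDist z Kᶜ • B) := by
        rw [(convex_ball 0 1).add_smul hxR hzR, smul_add, smul_add, smul_smul, smul_smul,
          smul_set_singleton, smul_set_singleton, add_add_add_comm, singleton_add_singleton]
        rfl
    _ ⊆ a • K + b • K := by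
        gcongr <;> exact singleton_add_infDist_compl_smul_unitBall_subset ‹_›
    _ ⊆ K := hK.set_combo_subset ha hb hab

end

theorem infDist_compl_antitone_from_incenter (K : Set (EuclideanSpace ℝ (Fin 2)))
    (hK : Convex ℝ K) (c : EuclideanSpace ℝ (Fin 2)) (hc : c ∈ K)
    (hmax : ∀ x ∈ K, Metric.infDist x Kᶜ ≤ Metric.infDist c Kᶜ)
    (y : EuclideanSpace ℝ (Fin 2)) (hy : y ∈ K) :
    AntitoneOn (fun t : ℝ => Metric.infDist (c + t • (y - c)) Kᶜ)
      (Set.Icc (0:ℝ) 1) :=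
  hK.concaveOn_infDist_compl.antitoneOn_add_smul_sub_of_isMaxOn hmax hc hy
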